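/- Let T₁,…,T_d be a commuting tuple of bounded operators on a complex Hilbert space H which is essentially normal and such that T₁H + ⋯ + T_dH is a closed subspace of finite codimension in H. Let M be a closed subspace with {0} ≠ M ≠ H and T_kM ⊆ M for all k. Then the restricted tuple (T_k|_M) on M is essentially normal if and only if the compressed tuple (P_{M⊥}T_k|_{M⊥}) on M^⊥ is essentially normal (i.e., the quotient Hilbert module H/M is essentially normal). -/

import Mathlib

set_option synthInstance.maxHeartbeats 1000000
set_option maxHeartbeats 1000000

open ContinuousLinearMap

/-- The restriction of a continuous linear operator to an invariant submodule. -/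
noncomputable def clmRestrict {E : Type*} [NormedAddCommGroup E] [InnerProductSpace ℂ E]
    [CompleteSpace E] (T : E →L[ℂ] E) (U : Submodule ℂ E)
    (h : ∀ x ∈ U, T x ∈ U) : U →L[ℂ] U :=
  { toLinearMap := (T : E →ₗ[ℂ] E).restrict h
    cont := Continuous.subtype_mk (T.continuous.comp continuous_subtype_val) _ }

/-- A tuple `T` of (commuting) operators is *essentially normal* if all of the
self-commutators `T j (T k)* − (T k)* T j` are compact. -/
def EssNormal {d : ℕ} {F : Type*} [NormedAddCommGroup F] [InnerProductSpace ℂ F]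
    [CompleteSpace F] (T : Fin d → F →L[ℂ] F) : Prop :=
  ∀ j k, IsCompactOperator ⇑(T j ∘L adjoint (T k) - adjoint (T k) ∘L T j)

/-- Essential normality of the restriction of a tuple of operators to a closed
invariant subspace `U` (the Hilbert submodule `U`). -/
def EssNormalOn {E : Type*} [NormedAddCommGroup E] [InnerProductSpace ℂ E]
    [CompleteSpace E] {d : ℕ} (T : Fin d → E →L[ℂ] E) (U : Submodule ℂ E)
    (hU : IsClosed (U : Set E)) (hinv : ∀ k, ∀ x ∈ U, T k x ∈ U) : Prop :=
  haveI : CompleteSpace U := hU.completeSpace_coe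
  EssNormal (fun k => clmRestrict (T k) U (hinv k))

/-- The orthogonal projection onto a closed subspace, as an operator on the ambient space. -/
noncomputable def projOf {E : Type*} [NormedAddCommGroup E] [InnerProductSpace ℂ E]
    [CompleteSpace E] (U : Submodule ℂ E) (hU : IsClosed (U : Set E)) : E →L[ℂ] E :=
  haveI : CompleteSpace U := hU.completeSpace_coe
  U.subtypeL ∘L Submodule.orthogonalProjectionOnto U

/-- The compression of a tuple of operators to the orthogonal complement of a
submodule `M`; this is the coordinate tuple of the quotient Hilbert module `E/M`. -/
noncomputable def compressPerp {E : Type*} [NormedAddCommGroup E] [InnerProductSpace ℂ E]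
    [CompleteSpace E] {d : ℕ} (T : Fin d → E →L[ℂ] E) (M : Submodule ℂ E) :
    Fin d → ↥(Mᗮ) →L[ℂ] ↥(Mᗮ) :=
  fun k => Submodule.orthogonalProjectionOnto Mᗮ ∘L T k ∘L (Mᗮ).subtypeL

section Aux

open Metric Set
open scoped InnerProductSpace ComplexInnerProductSpace

/-- If `A†A` is a compact operator between Hilbert spaces, then so is `A`. -/
theorem aux_compact_of_adjoint_comp {E F : Type*} [NormedAddCommGroup E] [InnerProductSpace ℂ E]
    [CompleteSpace E] [NormedAddCommGroup F] [InnerProductSpace ℂ F] [CompleteSpace F]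
    (A : E →L[ℂ] F) (h : IsCompactOperator ⇑(adjoint A ∘L A)) : IsCompactOperator ⇑A := by
  have key : ∀ z : E, ‖A z‖ ^ 2 ≤ ‖(adjoint A ∘L A) z‖ * ‖z‖ := by
    intro z
    calc ‖A z‖ ^ 2 = RCLike.re (⟪A z, A z⟫) := (inner_self_eq_norm_sq _).symm
      _ = RCLike.re (⟪(adjoint A) (A z), z⟫) := by rw [adjoint_inner_left]
      _ ≤ ‖(⟪(adjoint A) (A z), z⟫)‖ := RCLike.re_le_norm _
      _ ≤ ‖(adjoint A) (A z)‖ * ‖z‖ := norm_inner_le_norm _ _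
      _ = ‖(adjoint A ∘L A) z‖ * ‖z‖ := rfl
  have main : IsCompactOperator ⇑(A : E →ₗ[ℂ] F) := by
    rw [isCompactOperator_iff_isCompact_closure_image_closedBall (𝕜₁ := ℂ) (A : E →ₗ[ℂ] F)
      one_pos]
    refine TotallyBounded.isCompact_of_isClosed (TotallyBounded.closure ?_) isClosed_closure
    have hS : TotallyBounded ((⇑((adjoint A ∘L A) : E →ₗ[ℂ] E)) '' Metric.closedBall 0 1) := by
      obtain ⟨K, hK, hsub⟩ :=
        IsCompactOperator.image_subset_compact_of_bounded (𝕜₁ := ℂ)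
          (f := ((adjoint A ∘L A) : E →ₗ[ℂ] E)) h (Metric.isBounded_closedBall (x := 0) (r := 1))
      exact hK.totallyBounded.subset hsub
    rw [Metric.totallyBounded_iff]
    intro ε hε
    have hε2 : (0:ℝ) < ε ^ 2 / 8 := by positivity
    obtain ⟨t, hts, htf, hcover⟩ :=
      totallyBounded_iff_subset.mp hS _ (Metric.dist_mem_uniformity hε2)
    have hpre : ∀ y ∈ t, ∃ x, x ∈ Metric.closedBall (0:E) 1 ∧ (adjoint A ∘L A) x = y := by
      intro y hy
      obtain ⟨x, hx, hxy⟩ := hts hy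
      exact ⟨x, hx, hxy⟩
    choose! g hg1 hg2 using hpre
    refine ⟨(fun y => A (g y)) '' t, htf.image _, ?_⟩
    rintro w ⟨x, hx, rfl⟩
    have := hcover ⟨x, hx, rfl⟩
    rw [Set.mem_iUnion₂] at this
    obtain ⟨y, hyt, hdist⟩ := this
    refine Set.mem_iUnion₂.mpr ⟨A (g y), Set.mem_image_of_mem _ hyt, ?_⟩
    have hgy := hg1 y hyt
    have hAAy := hg2 y hyt
    have hxd : dist ((adjoint A ∘L A) x) y < ε ^ 2 / 8 := hdist
    have hsq : ‖A x - A (g y)‖ ^ 2 ≤ ‖(adjoint A ∘L A) x - (adjoint A ∘L A) (g y)‖ * ‖x - g y‖ := by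
      have := key (x - g y)
      simpa [map_sub] using this
    have h1 : ‖(adjoint A ∘L A) x - (adjoint A ∘L A) (g y)‖ < ε ^ 2 / 8 := by
      rw [hAAy, ← dist_eq_norm]; exact hxd
    have h2 : ‖x - g y‖ ≤ 2 := by
      have hx1 : ‖x‖ ≤ 1 := mem_closedBall_zero_iff.mp hx
      have hx2 : ‖g y‖ ≤ 1 := mem_closedBall_zero_iff.mp hgy
      calc ‖x - g y‖ ≤ ‖x‖ + ‖g y‖ := norm_sub_le _ _
        _ ≤ 2 := by linarith
    have h3 : ‖(adjoint A ∘L A) x - (adjoint A ∘L A) (g y)‖ * ‖x - g y‖ ≤ ε ^ 2 / 8 * 2 :=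
      mul_le_mul h1.le h2 (norm_nonneg _) hε2.le
    rw [Metric.mem_ball, dist_eq_norm]
    show ‖A x - A (g y)‖ < ε
    nlinarith [norm_nonneg (A x - A (g y))]
  exact main

end Aux

/-- For an essentially normal commuting tuple `T` with `T₁H+⋯+T_dH` closed of finite
codimension, and a nontrivial closed invariant subspace `M`, the restricted tuple on `M`
is essentially normal iff the compressed tuple on `M^⊥` (the quotient module `H/M`)
is essentially normal. -/
theorem stmt5 {H : Type*} [NormedAddCommGroup H] [InnerProductSpace ℂ H] [CompleteSpace H]
    {d : ℕ} (T : Fin d → H →L[ℂ] H)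
    (hcomm : ∀ j k, T j ∘L T k = T k ∘L T j)
    (hEN : EssNormal T)
    (hcl : IsClosed ((⨆ k, LinearMap.range (T k : H →ₗ[ℂ] H) : Submodule ℂ H) : Set H))
    (hfd : FiniteDimensional ℂ ↥((⨆ k, LinearMap.range (T k : H →ₗ[ℂ] H) : Submodule ℂ H)ᗮ))
    (M : Submodule ℂ H) (hMc : IsClosed (M : Set H))
    (hM0 : M ≠ ⊥) (hM1 : M ≠ ⊤)
    (hinv : ∀ k, ∀ x ∈ M, T k x ∈ M) :
    EssNormalOn T M hMc hinv ↔ EssNormal (compressPerp T M) := by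
  haveI : CompleteSpace M := hMc.completeSpace_coe
  set ι : M →L[ℂ] H := M.subtypeL with hι
  set κ : (Mᗮ : Submodule ℂ H) →L[ℂ] H := (Mᗮ).subtypeL with hκ
  set p : H →L[ℂ] M := Submodule.orthogonalProjectionOnto M with hp
  set q : H →L[ℂ] (Mᗮ : Submodule ℂ H) := Submodule.orthogonalProjectionOnto Mᗮ with hq
  have hadjι : adjoint ι = p := M.adjoint_subtypeL
  have hadjp : adjoint p = ι := M.adjoint_orthogonalProjectionOnto
  have hadjκ : adjoint κ = q := (Mᗮ).adjoint_subtypeL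
  have hadjq : adjoint q = κ := (Mᗮ).adjoint_orthogonalProjectionOnto
  have hdec : ∀ y : H, (ι (p y) : H) = y - κ (q y) := fun y =>
    eq_sub_of_add_eq (Submodule.starProjection_add_starProjection_orthogonal (K := M) y)
  have hdec' : ∀ y : H, (κ (q y) : H) = y - ι (p y) := by
    intro y; rw [hdec y]; abel
  have hqTι : ∀ k (m : M), q (T k (ι m)) = 0 := fun k m =>
    Submodule.orthogonalProjectionOnto_apply_of_mem_orthogonal (Submodule.le_orthogonal_orthogonal M (hinv k m m.2))
  have hA : ∀ k, clmRestrict (T k) M (hinv k) = p ∘L T k ∘L ι := by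
    intro k
    ext m
    have : (T k (ι m) : H) ∈ M := hinv k _ m.2
    simp only [comp_apply, hp]
    rw [show ((Submodule.orthogonalProjectionOnto M (T k (ι m)) : M) : H) = T k (ι m) from Submodule.starProjection_eq_self_iff.mpr this]
    rfl
  have hAadj : ∀ k, adjoint (clmRestrict (T k) M (hinv k)) = p ∘L adjoint (T k) ∘L ι := by
    intro k
    rw [hA k, adjoint_comp, adjoint_comp, hadjι, hadjp, comp_assoc]
  have hBadj : ∀ k, adjoint (p ∘L T k ∘L κ) = q ∘L adjoint (T k) ∘L ι := by
    intro k
    rw [adjoint_comp, adjoint_comp, hadjκ, hadjp, comp_assoc]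
  have hCadj : ∀ k, adjoint (q ∘L T k ∘L κ) = q ∘L adjoint (T k) ∘L κ := by
    intro k
    rw [adjoint_comp, adjoint_comp, hadjκ, hadjq, comp_assoc]
  have hC : ∀ k, compressPerp T M k = q ∘L T k ∘L κ := fun k => rfl
  have idA : ∀ j k,
      clmRestrict (T j) M (hinv j) ∘L adjoint (clmRestrict (T k) M (hinv k))
        - adjoint (clmRestrict (T k) M (hinv k)) ∘L clmRestrict (T j) M (hinv j)
      = (p ∘L (T j ∘L adjoint (T k) - adjoint (T k) ∘L T j) ∘L ι)
        - (p ∘L T j ∘L κ) ∘L adjoint (p ∘L T k ∘L κ) := by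
    intro j k
    rw [hA j, hAadj k, hBadj k]
    ext m
    simp only [comp_apply, sub_apply, coe_sub', Pi.sub_apply]
    simp only [hdec]
    simp [map_sub, hqTι]
    abel
  have idC : ∀ j k,
      (q ∘L T j ∘L κ) ∘L adjoint (q ∘L T k ∘L κ)
        - adjoint (q ∘L T k ∘L κ) ∘L (q ∘L T j ∘L κ)
      = (q ∘L (T j ∘L adjoint (T k) - adjoint (T k) ∘L T j) ∘L κ)
        + adjoint (p ∘L T k ∘L κ) ∘L (p ∘L T j ∘L κ) := by
    intro j k
    rw [hCadj k, hBadj k]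
    ext m
    simp only [comp_apply, sub_apply, coe_sub', Pi.sub_apply, add_apply]
    simp only [hdec']
    simp [map_sub, hqTι]
    abel
  -- compact compressions of the ambient self-commutators
  have hPD : ∀ j k, IsCompactOperator
      ⇑(p ∘L (T j ∘L adjoint (T k) - adjoint (T k) ∘L T j) ∘L ι) := by
    intro j k
    have h1 : IsCompactOperator
        (⇑(T j ∘L adjoint (T k) - adjoint (T k) ∘L T j) ∘ ⇑ι) := (hEN j k).comp_clm ι
    have h2 := h1.clm_comp p
    exact h2
  have hQD : ∀ j k, IsCompactOperator
      ⇑(q ∘L (T j ∘L adjoint (T k) - adjoint (T k) ∘L T j) ∘L κ) := by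
    intro j k
    have h1 : IsCompactOperator
        (⇑(T j ∘L adjoint (T k) - adjoint (T k) ∘L T j) ∘ ⇑κ) := (hEN j k).comp_clm κ
    have h2 := h1.clm_comp q
    exact h2
  rw [show EssNormalOn T M hMc hinv = EssNormal (fun k => clmRestrict (T k) M (hinv k)) from rfl]
  constructor
  · intro h
    have hBB : ∀ j k, IsCompactOperator
        ⇑((p ∘L T j ∘L κ) ∘L adjoint (p ∘L T k ∘L κ)) := by
      intro j k
      have hc := h j k
      have heq : (p ∘L T j ∘L κ) ∘L adjoint (p ∘L T k ∘L κ)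
          = (p ∘L (T j ∘L adjoint (T k) - adjoint (T k) ∘L T j) ∘L ι)
            - (clmRestrict (T j) M (hinv j) ∘L adjoint (clmRestrict (T k) M (hinv k))
               - adjoint (clmRestrict (T k) M (hinv k)) ∘L clmRestrict (T j) M (hinv j)) := by
        rw [idA j k]; abel
      rw [heq, coe_sub']
      exact (hPD j k).sub hc
    have hBadjC : ∀ k, IsCompactOperator ⇑(adjoint (p ∘L T k ∘L κ)) := by
      intro k
      apply aux_compact_of_adjoint_comp
      rw [adjoint_adjoint]
      exact hBB k k
    intro j k
    show IsCompactOperator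
      ⇑(compressPerp T M j ∘L adjoint (compressPerp T M k)
        - adjoint (compressPerp T M k) ∘L compressPerp T M j)
    rw [hC j, hC k, idC j k, coe_add']
    refine (hQD j k).add ?_
    have := (hBadjC k).comp_clm (p ∘L T j ∘L κ)
    exact this
  · intro h
    have hBB' : ∀ j k, IsCompactOperator
        ⇑(adjoint (p ∘L T k ∘L κ) ∘L (p ∘L T j ∘L κ)) := by
      intro j k
      have hc := h j k
      rw [hC j, hC k] at hc
      have heq : adjoint (p ∘L T k ∘L κ) ∘L (p ∘L T j ∘L κ)
          = ((q ∘L T j ∘L κ) ∘L adjoint (q ∘L T k ∘L κ)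
              - adjoint (q ∘L T k ∘L κ) ∘L (q ∘L T j ∘L κ))
            - (q ∘L (T j ∘L adjoint (T k) - adjoint (T k) ∘L T j) ∘L κ) := by
        rw [idC j k]; abel
      rw [heq, coe_sub']
      exact hc.sub (hQD j k)
    have hBc : ∀ j, IsCompactOperator ⇑(p ∘L T j ∘L κ) := fun j =>
      aux_compact_of_adjoint_comp _ (hBB' j j)
    intro j k
    show IsCompactOperator
      ⇑(clmRestrict (T j) M (hinv j) ∘L adjoint (clmRestrict (T k) M (hinv k))
        - adjoint (clmRestrict (T k) M (hinv k)) ∘L clmRestrict (T j) M (hinv j))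
    rw [idA j k, coe_sub']
    refine (hPD j k).sub ?_
    have := (hBc j).comp_clm (adjoint (p ∘L T k ∘L κ))
    exact this
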